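/- Recursive leakage decomposition across chained blocks: suppose M^{m−1} → (M_m, E_m) → Y_{e,m} and (M_m, E_m, Y_{e,m}) → (M^{m−1}, E_{m−1}) → Y_e^{m−1} are Markov chains conditioned on F^m. Then I(M^m, E_m; Y_e^m | F^m) ≤ I(M_m, E_m; Y_{e,m} | F^m) + I(M^{m−1}, E_{m−1}; Y_e^{m−1} | F^m). -/

import Mathlib

noncomputable def distOf {Ω α : Type*} [Fintype Ω] [DecidableEq α]
    (p : Ω → ℝ) (f : Ω → α) : α → ℝ :=
  fun a => ∑ ω ∈ Finset.univ.filter (fun ω => f ω = a), p ω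

noncomputable def entOf {Ω α : Type*} [Fintype Ω] [Fintype α] [DecidableEq α]
    (p : Ω → ℝ) (f : Ω → α) : ℝ :=
  (∑ a, Real.negMulLog (distOf p f a)) / Real.log 2

noncomputable def condEntOf {Ω α β : Type*} [Fintype Ω] [Fintype α] [DecidableEq α]
    [Fintype β] [DecidableEq β] (p : Ω → ℝ) (f : Ω → α) (g : Ω → β) : ℝ :=
  entOf p (fun ω => (f ω, g ω)) - entOf p g

/-- Conditional mutual information I(f ; g | h) = H(f|h) − H(f|g,h), in bits. -/
noncomputable def condMutInfoOf {Ω α β γ : Type*} [Fintype Ω] [Fintype α] [DecidableEq α]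
    [Fintype β] [DecidableEq β] [Fintype γ] [DecidableEq γ]
    (p : Ω → ℝ) (f : Ω → α) (g : Ω → β) (h : Ω → γ) : ℝ :=
  condEntOf p f h - condEntOf p f (fun ω => (g ω, h ω))

/-!
By the chain rule, the leakage to `Y_e^m = (Y_e^{m−1}, Y_{e,m})` is the leakage to `Y_{e,m}` plus the
leakage to `Y_e^{m−1}` given `Y_{e,m}`. The first part is `I(M_m,E_m; Y_{e,m} | F^m)` plus the
term `I(M^{m−1}; Y_{e,m} | M_m,E_m,F^m)` that the first Markov chain kills. The second part only
grows when `Y_{e,m}` is moved from the conditioning into the first argument and `E_{m−1}` is added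
there; the chain rule then splits the result into `I(M^{m−1},E_{m−1}; Y_e^{m−1} | F^m)` plus the
term that the second Markov chain kills. Both monotonicity steps are instances of `I ≥ 0`, which
follows from `log x ≤ x − 1`.
-/

open Real Finset

theorem mul_log_le_of_le {x a b c : ℝ} (hx : 0 ≤ x) (hxa : x ≤ a) (hxb : x ≤ b) (hac : a ≤ c) :
    x * (log a + log b - log c - log x) ≤ a * b / c - x := by
  rcases hx.eq_or_lt with rfl | hx
  · have hc : 0 ≤ c := hxa.trans hac
    simpa using div_nonneg (mul_nonneg hxa hxb) hc
  have ha : 0 < a := hx.trans_le hxa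
  have hb : 0 < b := hx.trans_le hxb
  have hc : 0 < c := ha.trans_le hac
  have hlog : log a + log b - log c - log x = log (a * b / (c * x)) := by
    rw [log_div (by positivity) (by positivity), log_mul ha.ne' hb.ne', log_mul hc.ne' hx.ne']
    ring
  calc x * (log a + log b - log c - log x) ≤ x * (a * b / (c * x) - 1) := by
        rw [hlog]; exact mul_le_mul_of_nonneg_left (log_le_sub_one_of_pos (by positivity)) hx.le
    _ = a * b / c - x := by field_simp

theorem negMulLog_sum {ι : Type*} (s : Finset ι) (x : ι → ℝ) :
    negMulLog (∑ i ∈ s, x i) = -∑ i ∈ s, x i * log (∑ j ∈ s, x j) := by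
  rw [negMulLog, ← sum_mul]; ring

theorem sum_negMulLog_subadditive {α β : Type*} [Fintype α] [Fintype β]
    (r : α → β → ℝ) (hr : ∀ a b, 0 ≤ r a b) :
    ∑ a, ∑ b, negMulLog (r a b) + negMulLog (∑ a, ∑ b, r a b)
      ≤ ∑ a, negMulLog (∑ b, r a b) + ∑ b, negMulLog (∑ a, r a b) := by
  set row := fun a => ∑ b, r a b
  set col := fun b => ∑ a, r a b
  set t := ∑ a, ∑ b, r a b
  have hrow : ∀ a b, r a b ≤ row a := fun a b =>
    single_le_sum (fun b _ => hr a b) (mem_univ b)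
  have hcol : ∀ a b, r a b ≤ col b := fun a b =>
    single_le_sum (fun a _ => hr a b) (mem_univ a)
  have hrow_t : ∀ a, row a ≤ t := fun a =>
    single_le_sum (fun a _ => sum_nonneg fun b _ => hr a b) (mem_univ a)
  have hcol_sum : ∑ b, col b = t := sum_comm
  have hgibbs : ∑ a, ∑ b, r a b * (log (row a) + log (col b) - log t - log (r a b))
      ≤ ∑ a, ∑ b, (row a * col b / t - r a b) :=
    sum_le_sum fun a _ => sum_le_sum fun b _ =>
      mul_log_le_of_le (hr a b) (hrow a b) (hcol a b) (hrow_t a)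
  have hmass : ∑ a, ∑ b, row a * col b / t = ∑ a, ∑ b, r a b := by
    simp_rw [← sum_div, ← sum_mul_sum, hcol_sum]
    exact mul_self_div_self t
  have hrow_ent : ∑ a, negMulLog (row a) = -∑ a, ∑ b, r a b * log (row a) := by
    simp_rw [row, negMulLog_sum, sum_neg_distrib]
  have hcol_ent : ∑ b, negMulLog (col b) = -∑ a, ∑ b, r a b * log (col b) := by
    simp_rw [col, negMulLog_sum, sum_neg_distrib]; rw [sum_comm]
  have ht_ent : negMulLog t = -∑ a, ∑ b, r a b * log t := by
    rw [show t = ∑ a, row a from rfl, negMulLog_sum]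
    simp_rw [row, sum_mul]
  have hr_ent : ∑ a, ∑ b, negMulLog (r a b) = -∑ a, ∑ b, r a b * log (r a b) := by
    simp [negMulLog]
  simp only [mul_sub, mul_add, sum_sub_distrib, sum_add_distrib, hmass] at hgibbs
  rw [hrow_ent, hcol_ent, ht_ent, hr_ent]
  linarith

section
variable {Ω α β : Type*} [Fintype Ω] (p : Ω → ℝ)

theorem distOf_nonneg [DecidableEq α] (hp : ∀ ω, 0 ≤ p ω) (f : Ω → α) (a : α) :
    0 ≤ distOf p f a :=
  sum_nonneg fun ω _ => hp ω

theorem distOf_congr [DecidableEq α] [DecidableEq β] {f : Ω → α} {g : Ω → β} {a : α} {b : β}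
    (h : ∀ ω, f ω = a ↔ g ω = b) : distOf p f a = distOf p g b := by
  unfold distOf
  rw [filter_congr fun ω _ => h ω]

theorem sum_distOf_prodMk_right [DecidableEq α] [Fintype β] [DecidableEq β]
    (f : Ω → α) (g : Ω → β) (a : α) :
    ∑ b, distOf p (fun ω => (f ω, g ω)) (a, b) = distOf p f a := by
  simp only [distOf, sum_filter, Prod.mk.injEq, ite_and]
  rw [sum_comm]
  simp

theorem entOf_eq_neg_sum_mul_log [Fintype α] [DecidableEq α] (f : Ω → α) :
    entOf p f = -(∑ ω, p ω * log (distOf p f (f ω))) / log 2 := by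
  rw [entOf, ← sum_fiberwise univ f (fun ω => p ω * log (distOf p f (f ω))), ← sum_neg_distrib]
  refine congrArg (· / log 2) (sum_congr rfl fun a _ => ?_)
  rw [distOf, negMulLog_sum]
  refine congrArg _ (sum_congr rfl fun ω hω => ?_)
  rw [(mem_filter.1 hω).2]
  rfl

theorem entOf_congr [Fintype α] [DecidableEq α] [Fintype β] [DecidableEq β]
    {f : Ω → α} {g : Ω → β} (h : ∀ ω ω', f ω' = f ω ↔ g ω' = g ω) :
    entOf p f = entOf p g := by
  simp only [entOf_eq_neg_sum_mul_log, distOf_congr p (h _)]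

end

section
variable {Ω α β γ δ α' β' γ' : Type*} [Fintype Ω] (p : Ω → ℝ)
  [Fintype α] [DecidableEq α] [Fintype β] [DecidableEq β]
  [Fintype γ] [DecidableEq γ] [Fintype δ] [DecidableEq δ]

theorem condMutInfoOf_congr [Fintype α'] [DecidableEq α'] [Fintype β'] [DecidableEq β']
    [Fintype γ'] [DecidableEq γ'] {f : Ω → α} {g : Ω → β} {h : Ω → γ}
    {f' : Ω → α'} {g' : Ω → β'} {h' : Ω → γ'}
    (hf : ∀ ω ω', f ω' = f ω ↔ f' ω' = f' ω) (hg : ∀ ω ω', g ω' = g ω ↔ g' ω' = g' ω)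
    (hh : ∀ ω ω', h ω' = h ω ↔ h' ω' = h' ω) :
    condMutInfoOf p f g h = condMutInfoOf p f' g' h' := by
  have hfh : entOf p (fun ω => (f ω, h ω)) = entOf p (fun ω => (f' ω, h' ω)) :=
    entOf_congr p (by simp [hf, hh])
  have hfgh : entOf p (fun ω => (f ω, g ω, h ω)) = entOf p (fun ω => (f' ω, g' ω, h' ω)) :=
    entOf_congr p (by simp [hf, hg, hh])
  have hgh : entOf p (fun ω => (g ω, h ω)) = entOf p (fun ω => (g' ω, h' ω)) :=
    entOf_congr p (by simp [hg, hh])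
  simp only [condMutInfoOf, condEntOf, hfh, hfgh, hgh, entOf_congr p hh]

theorem condMutInfoOf_comm (f : Ω → α) (g : Ω → β) (h : Ω → γ) :
    condMutInfoOf p f g h = condMutInfoOf p g f h := by
  have hswap : entOf p (fun ω => (f ω, g ω, h ω)) = entOf p (fun ω => (g ω, f ω, h ω)) :=
    entOf_congr p (by simp only [Prod.mk.injEq]; tauto)
  simp only [condMutInfoOf, condEntOf, hswap]
  ring

theorem condMutInfoOf_prod_left (f : Ω → α) (g : Ω → β) (h : Ω → γ) (k : Ω → δ) :
    condMutInfoOf p (fun ω => (f ω, g ω)) h k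
      = condMutInfoOf p f h k + condMutInfoOf p g h (fun ω => (f ω, k ω)) := by
  have e₁ : entOf p (fun ω => ((f ω, g ω), k ω)) = entOf p (fun ω => (g ω, f ω, k ω)) :=
    entOf_congr p (by simp only [Prod.mk.injEq]; tauto)
  have e₂ : entOf p (fun ω => ((f ω, g ω), h ω, k ω))
      = entOf p (fun ω => (g ω, h ω, f ω, k ω)) :=
    entOf_congr p (by simp only [Prod.mk.injEq]; tauto)
  have e₃ : entOf p (fun ω => (f ω, h ω, k ω)) = entOf p (fun ω => (h ω, f ω, k ω)) :=
    entOf_congr p (by simp only [Prod.mk.injEq]; tauto)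
  simp only [condMutInfoOf, condEntOf, e₁, e₂, e₃]
  ring

theorem condMutInfoOf_prod_right (f : Ω → α) (g : Ω → β) (h : Ω → γ) (k : Ω → δ) :
    condMutInfoOf p f (fun ω => (g ω, h ω)) k
      = condMutInfoOf p f g k + condMutInfoOf p f h (fun ω => (g ω, k ω)) := by
  rw [condMutInfoOf_comm, condMutInfoOf_prod_left, condMutInfoOf_comm p g,
    condMutInfoOf_comm p h]

theorem condMutInfoOf_nonneg (hp : ∀ ω, 0 ≤ p ω) (f : Ω → α) (g : Ω → β) (h : Ω → γ) :
    0 ≤ condMutInfoOf p f g h := by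
  -- With the conditioning variable first, this is `sum_negMulLog_subadditive` for each value of `h`.
  obtain ⟨q, hq⟩ : ∃ q : γ → α → β → ℝ,
      ∀ c a b, distOf p (fun ω => (h ω, f ω, g ω)) (c, a, b) = q c a b := ⟨_, fun _ _ _ => rfl⟩
  have hhf : ∀ c a, distOf p (fun ω => (h ω, f ω)) (c, a) = ∑ b, q c a b := fun c a => by
    rw [← sum_distOf_prodMk_right p (fun ω => (h ω, f ω)) g]
    exact sum_congr rfl fun b _ => hq c a b ▸ distOf_congr p fun ω => by simp [and_assoc]
  have hhg : ∀ c b, distOf p (fun ω => (h ω, g ω)) (c, b) = ∑ a, q c a b := fun c b => by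
    rw [← sum_distOf_prodMk_right p (fun ω => (h ω, g ω)) f]
    exact sum_congr rfl fun a _ =>
      hq c a b ▸ distOf_congr p fun ω => by simp only [Prod.mk.injEq]; tauto
  have hh : ∀ c, distOf p h c = ∑ a, ∑ b, q c a b := fun c => by
    simp_rw [← hhf, sum_distOf_prodMk_right]
  have hfh : entOf p (fun ω => (f ω, h ω)) = entOf p (fun ω => (h ω, f ω)) :=
    entOf_congr p (by simp only [Prod.mk.injEq]; tauto)
  have hfgh : entOf p (fun ω => (f ω, g ω, h ω)) = entOf p (fun ω => (h ω, f ω, g ω)) :=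
    entOf_congr p (by simp only [Prod.mk.injEq]; tauto)
  have hgh : entOf p (fun ω => (g ω, h ω)) = entOf p (fun ω => (h ω, g ω)) :=
    entOf_congr p (by simp only [Prod.mk.injEq]; tauto)
  have key : ∑ c, (∑ a, ∑ b, negMulLog (q c a b) + negMulLog (∑ a, ∑ b, q c a b))
      ≤ ∑ c, (∑ a, negMulLog (∑ b, q c a b) + ∑ b, negMulLog (∑ a, q c a b)) :=
    sum_le_sum fun c _ =>
      sum_negMulLog_subadditive (q c) fun a b => hq c a b ▸ distOf_nonneg p hp _ _
  simp only [condMutInfoOf, condEntOf, hfh, hfgh, hgh]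
  simp only [entOf, Fintype.sum_prod_type, hhf, hhg, hh, hq, sum_add_distrib] at key ⊢
  rw [← sub_nonneg] at key
  refine (div_nonneg key (log_nonneg one_le_two)).trans_eq ?_
  ring

theorem condMutInfoOf_le_prod_left (hp : ∀ ω, 0 ≤ p ω)
    (f : Ω → α) (g : Ω → β) (h : Ω → γ) (k : Ω → δ) :
    condMutInfoOf p f h k ≤ condMutInfoOf p (fun ω => (f ω, g ω)) h k := by
  rw [condMutInfoOf_prod_left]
  linarith [condMutInfoOf_nonneg p hp g h (fun ω => (f ω, k ω))]

theorem condMutInfoOf_cond_le_prod_left (hp : ∀ ω, 0 ≤ p ω)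
    (f : Ω → α) (g : Ω → β) (h : Ω → γ) (k : Ω → δ) :
    condMutInfoOf p g h (fun ω => (f ω, k ω)) ≤ condMutInfoOf p (fun ω => (f ω, g ω)) h k := by
  rw [condMutInfoOf_prod_left]
  linarith [condMutInfoOf_nonneg p hp f h k]

end

theorem recursive_leakage_decomposition_general
    {Ω A A' B B' C C' D : Type*} [Fintype Ω]
    [Fintype A] [DecidableEq A] [Fintype A'] [DecidableEq A']
    [Fintype B] [DecidableEq B] [Fintype B'] [DecidableEq B']
    [Fintype C] [DecidableEq C] [Fintype C'] [DecidableEq C']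
    [Fintype D] [DecidableEq D]
    (p : Ω → ℝ) (hp : ∀ ω, 0 ≤ p ω)
    (Mprev : Ω → A) (Mm : Ω → A') (Eprev : Ω → B) (Em : Ω → B')
    (Yeprev : Ω → C) (Yem : Ω → C') (Fm : Ω → D)
    (hmc1 : condMutInfoOf p Mprev Yem (fun ω => ((Mm ω, Em ω), Fm ω)) = 0)
    (hmc2 : condMutInfoOf p (fun ω => (Mm ω, Em ω, Yem ω)) Yeprev
      (fun ω => ((Mprev ω, Eprev ω), Fm ω)) = 0) :
    condMutInfoOf p (fun ω => ((Mprev ω, Mm ω), Em ω)) (fun ω => (Yeprev ω, Yem ω)) Fm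
      ≤ condMutInfoOf p (fun ω => (Mm ω, Em ω)) Yem Fm
        + condMutInfoOf p (fun ω => (Mprev ω, Eprev ω)) Yeprev Fm := by
  set U := fun ω => ((Mprev ω, Mm ω), Em ω)
  have hsplit : condMutInfoOf p U (fun ω => (Yeprev ω, Yem ω)) Fm
      = condMutInfoOf p U Yem Fm + condMutInfoOf p U Yeprev (fun ω => (Yem ω, Fm ω)) := by
    rw [← condMutInfoOf_prod_right]
    exact condMutInfoOf_congr p (fun _ _ => Iff.rfl) (by simp [and_comm]) (fun _ _ => Iff.rfl)
  have hcur : condMutInfoOf p U Yem Fm = condMutInfoOf p (fun ω => (Mm ω, Em ω)) Yem Fm := by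
    rw [condMutInfoOf_congr p (f' := fun ω => ((Mm ω, Em ω), Mprev ω))
      (by simp only [U, Prod.mk.injEq]; tauto) (fun _ _ => Iff.rfl) (fun _ _ => Iff.rfl),
      condMutInfoOf_prod_left, hmc1, add_zero]
  have hprev : condMutInfoOf p U Yeprev (fun ω => (Yem ω, Fm ω))
      ≤ condMutInfoOf p (fun ω => (Mprev ω, Eprev ω)) Yeprev Fm :=
    calc _ ≤ condMutInfoOf p (fun ω => (Yem ω, U ω)) Yeprev Fm :=
          condMutInfoOf_cond_le_prod_left p hp _ _ _ _
      _ ≤ condMutInfoOf p (fun ω => ((Yem ω, U ω), Eprev ω)) Yeprev Fm :=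
          condMutInfoOf_le_prod_left p hp _ _ _ _
      _ = condMutInfoOf p (fun ω => ((Mprev ω, Eprev ω), (Mm ω, Em ω, Yem ω))) Yeprev Fm :=
          condMutInfoOf_congr p (by simp only [U, Prod.mk.injEq]; tauto)
            (fun _ _ => Iff.rfl) (fun _ _ => Iff.rfl)
      _ = _ := by rw [condMutInfoOf_prod_left, hmc2, add_zero]
  linarith

/-- if M^{m−1} → (M_m,E_m) → Y_{e,m} and
(M_m,E_m,Y_{e,m}) → (M^{m−1},E_{m−1}) → Y_e^{m−1} are Markov chains conditioned
on F^m, then I(M^m,E_m; Y_e^m | F^m) ≤ I(M_m,E_m; Y_{e,m} | F^m)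
+ I(M^{m−1},E_{m−1}; Y_e^{m−1} | F^m). -/
theorem recursive_leakage_decomposition
    {Ω A A' B B' C C' D : Type*} [Fintype Ω]
    [Fintype A] [DecidableEq A] [Fintype A'] [DecidableEq A']
    [Fintype B] [DecidableEq B] [Fintype B'] [DecidableEq B']
    [Fintype C] [DecidableEq C] [Fintype C'] [DecidableEq C']
    [Fintype D] [DecidableEq D]
    (p : Ω → ℝ) (hp : ∀ ω, 0 ≤ p ω) (hp1 : ∑ ω, p ω = 1)
    (Mprev : Ω → A) (Mm : Ω → A') (Eprev : Ω → B) (Em : Ω → B')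
    (Yeprev : Ω → C) (Yem : Ω → C') (Fm : Ω → D)
    (hmc1 : condMutInfoOf p Mprev Yem (fun ω => ((Mm ω, Em ω), Fm ω)) = 0)
    (hmc2 : condMutInfoOf p (fun ω => (Mm ω, Em ω, Yem ω)) Yeprev
      (fun ω => ((Mprev ω, Eprev ω), Fm ω)) = 0) :
    condMutInfoOf p (fun ω => ((Mprev ω, Mm ω), Em ω)) (fun ω => (Yeprev ω, Yem ω)) Fm
      ≤ condMutInfoOf p (fun ω => (Mm ω, Em ω)) Yem Fm
        + condMutInfoOf p (fun ω => (Mprev ω, Eprev ω)) Yeprev Fm :=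
  recursive_leakage_decomposition_general p hp Mprev Mm Eprev Em Yeprev Yem Fm hmc1 hmc2
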